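/- arXiv:1608.08141 — 4 statements merged into one kernel-verified Lean document; each statement's English description precedes it below -/
import Mathlib

section
/- Let p(t) = t^n - c_1 t^{n-1} - ... - c_n with all c_k ≥ 0, let I be the set of indices k with c_k ≠ 0, and let d = gcd of the elements of I (with d = 0 if I is empty). Then p is weakly spectrally Perron if and only if d ≠ 0, i.e., if and only if some coefficient c_k is positive. -/
/-! Write `p(t) = t^n (1 - f(t))` with Cauchy's function `f(t) = ∑ c_k / t^k`. If some `c_k > 0`,
`f` decreases strictly on `(0, ∞)` and crosses the value `1`, at `ρ` say, so `ρ` is a root of `p`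
and `p > 0` on `(ρ, ∞)`. For a complex root `z` the triangle inequality gives
`|z|^n ≤ ∑ c_k |z|^(n-k)`, i.e. `p(|z|) ≤ 0`, hence `|z| ≤ ρ`; and `ρ` is simple because at a root
`ρ p'(ρ) = ∑ k c_k ρ^(n-k) > 0`. If all `c_k` vanish, `p = t^n` has no positive root at all. -/

open Matrix Polynomial Finset

/-- The polynomial `p(t) = t^n - c 1 * t^(n-1) - ⋯ - c n`. -/
noncomputable def polyOf (n : ℕ) (c : ℕ → ℝ) : Polynomial ℝ :=
  X ^ n - ∑ k ∈ Finset.Icc 1 n, Polynomial.C (c k) * X ^ (n - k)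

/-- Companion matrix of `p(t) = t^n - c 1 * t^(n-1) - ⋯ - c n`:
ones on the superdiagonal, last row `(c n, c (n-1), …, c 1)`, zeros elsewhere. -/
def companionOf (n : ℕ) (c : ℕ → ℝ) : Matrix (Fin n) (Fin n) ℝ :=
  fun i j => if (i : ℕ) + 1 = (j : ℕ) then 1
    else if (i : ℕ) = n - 1 then c (n - (j : ℕ)) else 0

/-- The characteristic polynomial of a real matrix, viewed over `ℂ`. -/
noncomputable def specPoly {n : ℕ} (A : Matrix (Fin n) (Fin n) ℝ) : Polynomial ℂ :=
  A.charpoly.map (algebraMap ℝ ℂ)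

/-- `A` is spectrally Perron: it has a simple positive real eigenvalue `ρ`
strictly exceeding the modulus of every other eigenvalue. -/
def SpectrallyPerron {n : ℕ} (A : Matrix (Fin n) (Fin n) ℝ) : Prop :=
  ∃ ρ : ℝ, 0 < ρ ∧ (specPoly A).rootMultiplicity (ρ : ℂ) = 1 ∧
    ∀ z : ℂ, (specPoly A).IsRoot z → z ≠ (ρ : ℂ) → ‖z‖ < ρ

/-- `A` is weakly spectrally Perron: it has a simple positive real eigenvalue `ρ`
with `ρ ≥ |λ|` for every eigenvalue `λ` of `A`. -/
def WeaklySpectrallyPerron {n : ℕ} (A : Matrix (Fin n) (Fin n) ℝ) : Prop :=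
  ∃ ρ : ℝ, 0 < ρ ∧ (specPoly A).rootMultiplicity (ρ : ℂ) = 1 ∧
    ∀ z : ℂ, (specPoly A).IsRoot z → ‖z‖ ≤ ρ

lemma rootMultiplicity_eq_one_of_isRoot {R : Type*} [CommRing R] {p : R[X]} {a : R}
    (hp : p.IsRoot a) (hp' : ¬(derivative p).IsRoot a) : p.rootMultiplicity a = 1 := by
  have hp0 : p ≠ 0 := by rintro rfl; simp at hp'
  have hpos := (rootMultiplicity_pos hp0).mpr hp
  have hle := mt (one_lt_rootMultiplicity_iff_isRoot hp0).mp (fun h => hp' h.2)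
  omega

lemma mul_eval_derivative_X_pow {R : Type*} [CommSemiring R] (t : R) (m : ℕ) :
    t * (derivative (X ^ m : R[X])).eval t = m * t ^ m := by
  cases m with
  | zero => simp
  | succ m =>
    rw [derivative_X_pow, eval_mul, eval_C, eval_pow, eval_X, Nat.add_sub_cancel, pow_succ]
    ring

section Companion

variable (c : ℕ → ℝ)

lemma polyOf_succ (m : ℕ) : polyOf (m + 1) c = X * polyOf m c - C (c (m + 1)) := by
  have hpow : ∀ k ∈ Icc 1 m, C (c k) * X ^ (m + 1 - k) = X * (C (c k) * X ^ (m - k)) := by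
    intro k hk
    rw [Nat.sub_add_comm (mem_Icc.mp hk).2, pow_succ]
    ring
  rw [polyOf, polyOf, sum_Icc_succ_top (by omega), sum_congr rfl hpow, ← mul_sum, Nat.sub_self,
    pow_zero, mul_one, pow_succ']
  ring

lemma submatrix_succ_companionOf_succ (m : ℕ) :
    (companionOf (m + 1) c).submatrix Fin.succ Fin.succ = companionOf m c := by
  ext i j
  simp only [submatrix_apply, companionOf, Fin.val_succ, add_left_inj, Nat.add_sub_cancel,
    Nat.add_sub_add_right]
  have := i.isLt
  split_ifs <;> first | rfl | omega

lemma charmatrix_companionOf_apply_zero {m : ℕ} {i : Fin (m + 2)} (h0 : i ≠ 0)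
    (hlast : i ≠ Fin.last (m + 1)) : charmatrix (companionOf (m + 2) c) i 0 = 0 := by
  rw [charmatrix_apply_ne _ _ _ h0, companionOf, if_neg (by simp),
    if_neg (fun h => hlast (Fin.ext (by simpa using h))), map_zero, neg_zero]

lemma det_charmatrix_companionOf_submatrix_last (m : ℕ) :
    ((charmatrix (companionOf (m + 1) c)).submatrix Fin.castSucc Fin.succ).det = (-1) ^ m := by
  have hdiag (i : Fin m) : charmatrix (companionOf (m + 1) c) i.castSucc i.succ = -1 := by
    rw [charmatrix_apply_ne _ _ _ Fin.castSucc_lt_succ.ne, companionOf, if_pos (by simp),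
      map_one]
  rw [det_of_isLowerTriangular _ ?_]
  · simp [hdiag]
  intro i j hij
  have hij : (i : ℕ) < j := hij
  rw [submatrix_apply, charmatrix_apply_ne _ _ _ (fun h => by simp [Fin.ext_iff] at h; omega),
    companionOf, if_neg (by simp; omega), if_neg (by simp; omega), map_zero, neg_zero]

theorem charpoly_companionOf : ∀ n : ℕ, (companionOf n c).charpoly = polyOf n c
  | 0 => by simp [Matrix.charpoly, polyOf]
  | 1 => by simp [Matrix.charpoly, companionOf, polyOf, charmatrix_apply_eq]
  | m + 2 => by
    -- only rows `0` and `last` of the first column are nonzero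
    rw [Matrix.charpoly, det_succ_column_zero, ← sum_subset (subset_univ {0, Fin.last (m + 1)})
      (fun i _ hi => by simp at hi; simp [charmatrix_companionOf_apply_zero c hi.1 hi.2]),
      sum_pair (by simp [Fin.ext_iff]), Fin.succAbove_zero, Fin.succAbove_last]
    have hsub : (charmatrix (companionOf (m + 2) c)).submatrix Fin.succ Fin.succ
        = charmatrix (companionOf (m + 1) c) := by
      rw [← submatrix_succ_companionOf_succ c (m + 1)]
      ext i j
      by_cases h : i = j <;> simp [h]
    have h00 : charmatrix (companionOf (m + 2) c) 0 0 = X := by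
      simp [charmatrix_apply_eq, companionOf]
    have hlast : charmatrix (companionOf (m + 2) c) (Fin.last (m + 1)) 0 = -C (c (m + 2)) := by
      rw [charmatrix_apply_ne _ _ _ (by simp [Fin.ext_iff]), companionOf]
      simp
    rw [hsub, h00, hlast, det_charmatrix_companionOf_submatrix_last, ← Matrix.charpoly,
      charpoly_companionOf (m + 1), polyOf_succ c (m + 1), Fin.val_last, Fin.val_zero]
    have hsign : ((-1 : ℝ[X]) ^ (m + 1)) * (-1) ^ (m + 1) = 1 := by rw [← mul_pow]; simp
    linear_combination (-C (c (m + 2))) * hsign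

end Companion

section Cauchy

variable {n k₀ : ℕ} {c : ℕ → ℝ} {ρ : ℝ}

lemma eval_polyOf (t : ℝ) :
    (polyOf n c).eval t = t ^ n - ∑ k ∈ Icc 1 n, c k * t ^ (n - k) := by
  simp [polyOf, eval_finsetSum]

lemma mul_eval_derivative_polyOf (t : ℝ) :
    t * (derivative (polyOf n c)).eval t
      = n * (polyOf n c).eval t + ∑ k ∈ Icc 1 n, k * c k * t ^ (n - k) := by
  simp only [polyOf, derivative_sub, derivative_sum, derivative_C_mul, eval_sub, eval_finsetSum,
    eval_mul, eval_C, eval_pow, eval_X, mul_sub, mul_sum, mul_left_comm t,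
    mul_eval_derivative_X_pow]
  rw [sub_add, ← sum_sub_distrib]
  congr 1
  refine sum_congr rfl fun k hk => ?_
  rw [Nat.cast_sub (mem_Icc.mp hk).2]
  ring

noncomputable def cauchyFun (n : ℕ) (c : ℕ → ℝ) (t : ℝ) : ℝ := ∑ k ∈ Icc 1 n, c k / t ^ k

lemma eval_polyOf_eq_mul_one_sub_cauchyFun {t : ℝ} (ht : t ≠ 0) :
    (polyOf n c).eval t = t ^ n * (1 - cauchyFun n c t) := by
  rw [eval_polyOf, cauchyFun, mul_sub, mul_one, mul_sum]
  congr 1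
  refine sum_congr rfl fun k hk => ?_
  rw [pow_sub₀ t ht (mem_Icc.mp hk).2]
  ring

lemma eval_norm_nonpos_of_isRoot_map (hc : ∀ k ∈ Icc 1 n, 0 ≤ c k) {z : ℂ}
    (hz : ((polyOf n c).map (algebraMap ℝ ℂ)).IsRoot z) : (polyOf n c).eval ‖z‖ ≤ 0 := by
  have hz : z ^ n = ∑ k ∈ Icc 1 n, (c k : ℂ) * z ^ (n - k) := by
    simpa [polyOf, eval_finsetSum, sub_eq_zero] using hz
  rw [eval_polyOf, sub_nonpos]
  calc ‖z‖ ^ n = ‖∑ k ∈ Icc 1 n, (c k : ℂ) * z ^ (n - k)‖ := by rw [← norm_pow, hz]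
    _ ≤ ∑ k ∈ Icc 1 n, ‖(c k : ℂ) * z ^ (n - k)‖ := norm_sum_le _ _
    _ = ∑ k ∈ Icc 1 n, c k * ‖z‖ ^ (n - k) := sum_congr rfl fun k hk => by
      rw [norm_mul, norm_pow, Complex.norm_real, Real.norm_of_nonneg (hc k hk)]

lemma cauchyFun_strictAntiOn (hc : ∀ k ∈ Icc 1 n, 0 ≤ c k) (hk₀ : k₀ ∈ Icc 1 n)
    (hck₀ : 0 < c k₀) : StrictAntiOn (cauchyFun n c) (Set.Ioi 0) := by
  intro a ha b _ hab
  have ha : (0 : ℝ) < a := ha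
  refine sum_lt_sum (fun k hk => ?_) ⟨k₀, hk₀, ?_⟩
  · exact div_le_div_of_nonneg_left (hc k hk) (pow_pos ha k) (pow_le_pow_left₀ ha.le hab.le k)
  · exact div_lt_div_of_pos_left hck₀ (pow_pos ha k₀)
      (pow_lt_pow_left₀ hab ha.le (Nat.one_le_iff_ne_zero.mp (mem_Icc.mp hk₀).1))

lemma exists_cauchyFun_eq_one (hc : ∀ k ∈ Icc 1 n, 0 ≤ c k) (hk₀ : k₀ ∈ Icc 1 n)
    (hck₀ : 0 < c k₀) : ∃ ρ, 0 < ρ ∧ cauchyFun n c ρ = 1 := by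
  set ε := min 1 (c k₀)
  set T := max 1 (∑ k ∈ Icc 1 n, c k)
  have hε : 0 < ε := lt_min one_pos hck₀
  have hεT : ε ≤ T := (min_le_left _ _).trans (le_max_left _ _)
  have hT : 1 ≤ T := le_max_left _ _
  have hcont : ContinuousOn (cauchyFun n c) (Set.Icc ε T) :=
    continuousOn_finsetSum _ fun k _ => continuousOn_const.div (continuousOn_pow k)
      fun t ht => pow_ne_zero k (hε.trans_le ht.1).ne'
  have hεbig : 1 ≤ cauchyFun n c ε := calc
    1 ≤ c k₀ / ε ^ k₀ := (one_le_div (pow_pos hε k₀)).mpr <|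
      (pow_le_of_le_one hε.le (min_le_left _ _)
        (Nat.one_le_iff_ne_zero.mp (mem_Icc.mp hk₀).1)).trans (min_le_right _ _)
    _ ≤ cauchyFun n c ε :=
      single_le_sum (f := fun k => c k / ε ^ k)
        (fun k hk => div_nonneg (hc k hk) (pow_nonneg hε.le k)) hk₀
  have hTsmall : cauchyFun n c T ≤ 1 := calc
    cauchyFun n c T ≤ ∑ k ∈ Icc 1 n, c k / T := sum_le_sum fun k hk =>
      div_le_div_of_nonneg_left (hc k hk) (by positivity)
        (le_self_pow₀ hT (Nat.one_le_iff_ne_zero.mp (mem_Icc.mp hk).1))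
    _ ≤ 1 := by
      rw [← sum_div]
      exact div_le_one_of_le₀ (le_max_right _ _) (by positivity)
  obtain ⟨ρ, hρ, hρ1⟩ := intermediate_value_Icc' hεT hcont ⟨hTsmall, hεbig⟩
  exact ⟨ρ, hε.trans_le hρ.1, hρ1⟩

lemma isRoot_polyOf_of_cauchyFun_eq_one (hρ : 0 < ρ) (hρ1 : cauchyFun n c ρ = 1) :
    (polyOf n c).IsRoot ρ := by
  rw [IsRoot, eval_polyOf_eq_mul_one_sub_cauchyFun hρ.ne', hρ1, sub_self, mul_zero]

lemma not_isRoot_derivative_polyOf_of_cauchyFun_eq_one (hc : ∀ k ∈ Icc 1 n, 0 ≤ c k)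
    (hk₀ : k₀ ∈ Icc 1 n) (hck₀ : 0 < c k₀) (hρ : 0 < ρ) (hρ1 : cauchyFun n c ρ = 1) :
    ¬(derivative (polyOf n c)).IsRoot ρ := by
  intro h
  have hpos : 0 < ∑ k ∈ Icc 1 n, k * c k * ρ ^ (n - k) :=
    sum_pos' (fun k hk => by have := hc k hk; positivity)
      ⟨k₀, hk₀, by have := (mem_Icc.mp hk₀).1; positivity⟩
  have hderiv := mul_eval_derivative_polyOf (n := n) (c := c) ρ
  rw [h.eq_zero, (isRoot_polyOf_of_cauchyFun_eq_one hρ hρ1).eq_zero] at hderiv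
  linarith

lemma norm_le_of_isRoot_map_polyOf (hc : ∀ k ∈ Icc 1 n, 0 ≤ c k)
    (hk₀ : k₀ ∈ Icc 1 n) (hck₀ : 0 < c k₀) (hρ : 0 < ρ) (hρ1 : cauchyFun n c ρ = 1) {z : ℂ}
    (hz : ((polyOf n c).map (algebraMap ℝ ℂ)).IsRoot z) : ‖z‖ ≤ ρ := by
  by_contra! hlt
  have hz0 : 0 < ‖z‖ := hρ.trans hlt
  have hsmall : cauchyFun n c ‖z‖ < 1 :=
    hρ1 ▸ cauchyFun_strictAntiOn hc hk₀ hck₀ hρ hz0 hlt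
  have hnonpos := eval_norm_nonpos_of_isRoot_map hc hz
  rw [eval_polyOf_eq_mul_one_sub_cauchyFun hz0.ne'] at hnonpos
  nlinarith [pow_pos hz0 n]

lemma specPoly_companionOf (n : ℕ) (c : ℕ → ℝ) :
    specPoly (companionOf n c) = (polyOf n c).map (algebraMap ℝ ℂ) := by
  rw [specPoly, charpoly_companionOf]

lemma polyOf_eq_X_pow (h : ∀ k ∈ Icc 1 n, c k = 0) : polyOf n c = X ^ n := by
  rw [polyOf, sum_eq_zero fun k hk => by rw [h k hk, C_0, zero_mul], sub_zero]

theorem weaklySpectrallyPerron_companionOf (hc : ∀ k ∈ Icc 1 n, 0 ≤ c k) (hk₀ : k₀ ∈ Icc 1 n)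
    (hck₀ : 0 < c k₀) : WeaklySpectrallyPerron (companionOf n c) := by
  obtain ⟨ρ, hρ, hρ1⟩ := exists_cauchyFun_eq_one hc hk₀ hck₀
  refine ⟨ρ, hρ, ?_, fun z hz => ?_⟩
  · rw [specPoly_companionOf, ← Complex.coe_algebraMap,
      ← eq_rootMultiplicity_map (algebraMap ℝ ℂ).injective]
    exact rootMultiplicity_eq_one_of_isRoot (isRoot_polyOf_of_cauchyFun_eq_one hρ hρ1)
      (not_isRoot_derivative_polyOf_of_cauchyFun_eq_one hc hk₀ hck₀ hρ hρ1)
  · exact norm_le_of_isRoot_map_polyOf hc hk₀ hck₀ hρ hρ1 (specPoly_companionOf n c ▸ hz)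

theorem not_weaklySpectrallyPerron_companionOf (h : ∀ k ∈ Icc 1 n, c k = 0) :
    ¬WeaklySpectrallyPerron (companionOf n c) := by
  rintro ⟨ρ, hρ, hmult, -⟩
  rw [specPoly_companionOf, polyOf_eq_X_pow h, rootMultiplicity_eq_zero (by simp [hρ.ne'])] at hmult
  exact zero_ne_one hmult

end Cauchy

lemma gcd_filter_id_ne_zero_iff {s : Finset ℕ} (hs : 0 ∉ s) (p : ℕ → Prop) [DecidablePred p] :
    (s.filter p).gcd id ≠ 0 ↔ ∃ k ∈ s, p k := by
  simp only [Ne, Finset.gcd_eq_zero_iff, mem_filter, id]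
  grind

theorem cauchy_weakly_spectrally_perron_general (n : ℕ) (c : ℕ → ℝ)
    (hc : ∀ k ∈ Finset.Icc 1 n, 0 ≤ c k) :
    WeaklySpectrallyPerron (companionOf n c) ↔
      ((Finset.Icc 1 n).filter (fun k => c k ≠ 0)).gcd id ≠ 0 := by
  rw [gcd_filter_id_ne_zero_iff (by simp)]
  constructor
  · contrapose!
    exact not_weaklySpectrallyPerron_companionOf
  · rintro ⟨k, hk, hck⟩
    exact weaklySpectrallyPerron_companionOf hc hk ((hc k hk).lt_of_ne' hck)

/-- Cauchy: `p` is weakly spectrally Perron iff `d := gcd {k : c k ≠ 0} ≠ 0`,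
i.e. iff some coefficient `c k` is positive. -/
theorem cauchy_weakly_spectrally_perron (n : ℕ) (hn : 1 ≤ n) (c : ℕ → ℝ)
    (hc : ∀ k ∈ Finset.Icc 1 n, 0 ≤ c k) :
    WeaklySpectrallyPerron (companionOf n c) ↔
      ((Finset.Icc 1 n).filter (fun k => c k ≠ 0)).gcd id ≠ 0 :=
  cauchy_weakly_spectrally_perron_general n c hc
end

section
/- The polynomial p(t) = t^3 - 2t^2 - t + 2 is spectrally Perron (its companion matrix has eigenvalues 2, 1, -1, with 2 simple and strictly dominant), but its companion matrix is not eventually nonnegative: for every k ≥ 3, the first column of C^k has a negative entry. -/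
open Matrix Polynomial

/-!
The eigenvalues of `C` are `2, 1, -1`, so the entries of `C^k` are combinations of
`2^k, 1, (-1)^k`. Solving the recurrence `u (k+3) = 2 u (k+2) + u (k+1) - 2 u k` read off the
last row of `C`, the first column of `C^k` is `(u k, u (k+1), u (k+2))` with
`u k = 1 + ((-1)^k - 2^k)/3`. The dominant eigenvalue `2` enters `u` with a negative
coefficient, so `u k < 0` for `k ≥ 3`.
-/

theorem spectrallyPerron_of_specPoly_eq_mul {n : ℕ} {A : Matrix (Fin n) (Fin n) ℝ} {ρ : ℝ}
    {q : ℂ[X]} (hρ : 0 < ρ) (hA : specPoly A = (X - C (ρ : ℂ)) * q) (hqρ : ¬ q.IsRoot ρ)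
    (hq : ∀ z : ℂ, q.IsRoot z → ‖z‖ < ρ) : SpectrallyPerron A := by
  have hq0 : q ≠ 0 := by
    rintro rfl
    exact hqρ (eval_zero (x := (ρ : ℂ)))
  refine ⟨ρ, hρ, ?_, fun z hz hzρ => hq z ?_⟩
  · rw [hA, rootMultiplicity_mul (mul_ne_zero (X_sub_C_ne_zero _) hq0),
      rootMultiplicity_X_sub_C_self, rootMultiplicity_eq_zero hqρ]
  · rw [hA, IsRoot, eval_mul, mul_eq_zero] at hz
    exact hz.resolve_left (by simpa [sub_eq_zero] using hzρ)

theorem Matrix.charpoly_companion_three {R : Type*} [CommRing R] (a b c : R) :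
    (!![0, 1, 0; 0, 0, 1; a, b, c] : Matrix (Fin 3) (Fin 3) R).charpoly
      = X ^ 3 - C c * X ^ 2 - C b * X - C a := by
  rw [Matrix.charpoly, Matrix.det_fin_three]
  simp [Matrix.charmatrix]
  ring

theorem Matrix.companion_three_pow_apply_zero {R : Type*} [CommSemiring R] {a b c : R}
    {u : ℕ → R} (h0 : u 0 = 1) (h1 : u 1 = 0) (h2 : u 2 = 0)
    (hu : ∀ k, u (k + 3) = a * u k + b * u (k + 1) + c * u (k + 2)) (k : ℕ) (i : Fin 3) :
    ((!![0, 1, 0; 0, 0, 1; a, b, c] : Matrix (Fin 3) (Fin 3) R) ^ k) i 0 = u (k + i) := by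
  induction k generalizing i with
  | zero => fin_cases i <;> simp [h0, h1, h2]
  | succ k ih =>
    rw [pow_succ', mul_apply, Fin.sum_univ_three, ih 0, ih 1, ih 2]
    fin_cases i <;> simp [hu, add_assoc]

noncomputable def columnSeq (k : ℕ) : ℝ := 1 + ((-1) ^ k - 2 ^ k) / 3

theorem columnSeq_add_three (k : ℕ) :
    columnSeq (k + 3) = -2 * columnSeq k + 1 * columnSeq (k + 1) + 2 * columnSeq (k + 2) := by
  simp only [columnSeq, pow_succ]
  ring

theorem columnSeq_neg {k : ℕ} (hk : 3 ≤ k) : columnSeq k < 0 := by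
  have h_alt : (-1 : ℝ) ^ k ≤ 1 := by
    rcases neg_one_pow_eq_or ℝ k with h | h <;> norm_num [h]
  have h_two : (2 : ℝ) ^ 3 ≤ 2 ^ k := pow_le_pow_right₀ (by norm_num) hk
  rw [columnSeq]
  linarith

/-- The companion matrix of `p(t) = t^3 - 2t^2 - t + 2` is spectrally Perron,
but it is not eventually nonnegative: for every `k ≥ 3` the first column of
`C^k` has a negative entry. -/
theorem example_spectrally_perron_not_eventually_nonneg :
    SpectrallyPerron (!![0, 1, 0; 0, 0, 1; -2, 1, 2] : Matrix (Fin 3) (Fin 3) ℝ) ∧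
    (∀ k : ℕ, 3 ≤ k →
      ∃ i : Fin 3, ((!![0, 1, 0; 0, 0, 1; -2, 1, 2] : Matrix (Fin 3) (Fin 3) ℝ) ^ k) i 0 < 0) ∧
    ¬ ∃ k : ℕ, 0 < k ∧
      ∀ i j : Fin 3, 0 ≤ ((!![0, 1, 0; 0, 0, 1; -2, 1, 2] : Matrix (Fin 3) (Fin 3) ℝ) ^ k) i j := by
  have h_spec : specPoly (!![0, 1, 0; 0, 0, 1; -2, 1, 2] : Matrix (Fin 3) (Fin 3) ℝ)
      = (X - C ((2 : ℝ) : ℂ)) * ((X - C 1) * (X - C (-1))) := by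
    rw [specPoly, charpoly_companion_three]
    simp only [Polynomial.map_sub, Polynomial.map_mul, Polynomial.map_pow, map_X, map_C]
    norm_num [C_neg, C_1]
    ring
  have h_col := companion_three_pow_apply_zero (u := columnSeq) (by norm_num [columnSeq])
    (by norm_num [columnSeq]) (by norm_num [columnSeq]) columnSeq_add_three
  refine ⟨spectrallyPerron_of_specPoly_eq_mul two_pos h_spec ?_ ?_, ?_, ?_⟩
  · norm_num [IsRoot]
  · intro z hz
    simp only [IsRoot, eval_mul, eval_sub, eval_X, eval_C, mul_eq_zero, sub_eq_zero] at hz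
    rcases hz with rfl | rfl <;> norm_num
  · exact fun k hk => ⟨0, by simpa [h_col] using columnSeq_neg hk⟩
  · rintro ⟨k, hk, h_nonneg⟩
    have := h_nonneg 2 0
    rw [h_col] at this
    exact this.not_gt (columnSeq_neg (by change 3 ≤ k + 2; omega))
end

section
/- Let p(t) = t^n - c_1 t^{n-1} - ... - c_n with all c_k ≥ 0, some c_k > 0, and gcd{k : c_k > 0} = 1. Then the unique positive root ρ of p satisfies ρ > |λ| for every other root λ of p. -/
open Matrix Polynomial Finset

lemma exists_ne_zero_of_gcd_eq_one {s : Finset ℕ} (hs : s.gcd id = 1) : ∃ k ∈ s, k ≠ 0 := by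
  by_contra! h
  exact zero_ne_one ((Finset.gcd_eq_zero_iff (f := id).2 h).symm.trans hs)

lemma eq_one_of_pow_eq_one_of_gcd_eq_one {M : Type*} [Monoid M] {s : Finset ℕ} {u : M}
    (hs : s.gcd id = 1) (hu : ∀ k ∈ s, u ^ k = 1) : u = 1 := by
  have : orderOf u ∣ s.gcd id := Finset.dvd_gcd fun k hk => orderOf_dvd_of_pow_eq_one (hu k hk)
  rwa [hs, Nat.dvd_one, orderOf_eq_one_iff] at this

open scoped ComplexOrder in
lemma Complex.eq_one_of_norm_eq_one_of_re_eq_one {w : ℂ} (hn : ‖w‖ = 1) (hre : w.re = 1) :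
    w = 1 := by
  have hw : 0 ≤ w := Complex.re_eq_norm.1 (hre.trans hn.symm)
  exact Complex.ext hre ((Complex.nonneg_iff.1 hw).2.symm)

section WeightedPowerSums

variable {s : Finset ℕ} {a : ℕ → ℝ}

lemma exists_pos_sum_mul_pow_eq_one (h0 : 0 ∉ s) (ha : ∀ k ∈ s, 0 ≤ a k)
    (hpos : ∃ k ∈ s, 0 < a k) : ∃ y : ℝ, 0 < y ∧ ∑ k ∈ s, a k * y ^ k = 1 := by
  obtain ⟨k₀, hk₀, hak₀⟩ := hpos
  set q : ℝ → ℝ := fun y => ∑ k ∈ s, a k * y ^ k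
  set Y : ℝ := 1 + (a k₀)⁻¹
  have hY : 1 ≤ Y := by simp [Y, hak₀.le]
  have hq0 : q 0 = 0 := Finset.sum_eq_zero fun k hk => by
    simp [zero_pow (ne_of_mem_of_not_mem hk h0)]
  have hqY : 1 ≤ q Y := calc
    1 ≤ a k₀ * Y := by
      rw [mul_add, mul_one, mul_inv_cancel₀ hak₀.ne']; linarith
    _ ≤ a k₀ * Y ^ k₀ := by
      gcongr; exact le_self_pow₀ hY (ne_of_mem_of_not_mem hk₀ h0)
    _ ≤ q Y := Finset.single_le_sum (f := fun k => a k * Y ^ k)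
      (fun k hk => mul_nonneg (ha k hk) (by positivity)) hk₀
  have hcont : ContinuousOn q (Set.Icc 0 Y) := by fun_prop
  obtain ⟨y, hyI, hqy⟩ :=
    intermediate_value_Icc (by linarith) hcont ⟨hq0.trans_le zero_le_one, hqY⟩
  refine ⟨y, lt_of_le_of_ne hyI.1 ?_, hqy⟩
  rintro rfl
  simp [hq0] at hqy

variable (ha : ∀ k ∈ s, 0 ≤ a k) (hsum : ∑ k ∈ s, a k = 1) {u : ℂ}
  (hu : ∑ k ∈ s, a k * u ^ k = 1)
include ha hsum hu

lemma one_le_norm_of_sum_mul_pow_eq_one (hpos : ∃ k ∈ s, k ≠ 0 ∧ 0 < a k) : 1 ≤ ‖u‖ := by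
  by_contra! hlt
  obtain ⟨k₀, hk₀, hk₀0, hak₀⟩ := hpos
  have := calc
    (1 : ℝ) = ‖∑ k ∈ s, a k * u ^ k‖ := by rw [hu, norm_one]
    _ ≤ ∑ k ∈ s, a k * ‖u‖ ^ k := by
      refine (norm_sum_le _ _).trans_eq (Finset.sum_congr rfl fun k hk => ?_)
      rw [norm_mul, norm_pow, Complex.norm_real, Real.norm_of_nonneg (ha k hk)]
    _ < ∑ k ∈ s, a k := by
      refine Finset.sum_lt_sum (fun k hk => ?_) ⟨k₀, hk₀, ?_⟩
      · exact mul_le_of_le_one_right (ha k hk) (pow_le_one₀ (norm_nonneg u) hlt.le)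
      · exact mul_lt_of_lt_one_right hak₀ (pow_lt_one₀ (norm_nonneg u) hlt hk₀0)
  linarith

lemma pow_eq_one_of_sum_mul_pow_eq_one (hnorm : ‖u‖ = 1) {k : ℕ} (hk : k ∈ s) (hak : 0 < a k) :
    u ^ k = 1 := by
  have hpow : ∀ k, ‖u ^ k‖ = 1 := fun k => by rw [norm_pow, hnorm, one_pow]
  have hdefect : ∑ k ∈ s, a k * (1 - (u ^ k).re) = 0 := by
    have hre : ∑ k ∈ s, a k * (u ^ k).re = 1 := by
      simpa [Complex.re_sum] using congrArg Complex.re hu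
    simp only [mul_sub, mul_one, Finset.sum_sub_distrib, hsum, hre, sub_self]
  have hterm := (Finset.sum_eq_zero_iff_of_nonneg fun k hk => mul_nonneg (ha k hk)
    (sub_nonneg.2 ((Complex.re_le_norm _).trans (hpow k).le))).1 hdefect k hk
  refine Complex.eq_one_of_norm_eq_one_of_re_eq_one (hpow k) ?_
  linarith [(mul_eq_zero.1 hterm).resolve_left hak.ne']

theorem eq_one_or_one_lt_norm_of_sum_mul_pow_eq_one
    (hgcd : (s.filter fun k => 0 < a k).gcd id = 1) : u = 1 ∨ 1 < ‖u‖ := by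
  obtain ⟨k, hk, hk0⟩ := exists_ne_zero_of_gcd_eq_one hgcd
  rw [Finset.mem_filter] at hk
  rcases (one_le_norm_of_sum_mul_pow_eq_one ha hsum hu ⟨k, hk.1, hk0, hk.2⟩).eq_or_lt with h | h
  · refine Or.inl (eq_one_of_pow_eq_one_of_gcd_eq_one hgcd fun k hk => ?_)
    rw [Finset.mem_filter] at hk
    exact pow_eq_one_of_sum_mul_pow_eq_one ha hsum hu h.symm hk.1 hk.2
  · exact Or.inr h

end WeightedPowerSums

section PolyOf

variable {n : ℕ} {c : ℕ → ℝ}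

lemma isRoot_map_polyOf_iff {K : Type*} [Field K] [Algebra ℝ K] {z : K} (hz : z ≠ 0) :
    ((polyOf n c).map (algebraMap ℝ K)).IsRoot z ↔
      ∑ k ∈ Icc 1 n, algebraMap ℝ K (c k) * z⁻¹ ^ k = 1 := by
  have hsum : ∑ k ∈ Icc 1 n, algebraMap ℝ K (c k) * z ^ (n - k)
      = z ^ n * ∑ k ∈ Icc 1 n, algebraMap ℝ K (c k) * z⁻¹ ^ k := by
    rw [Finset.mul_sum]
    refine Finset.sum_congr rfl fun k hk => ?_
    rw [pow_sub₀ z hz (Finset.mem_Icc.1 hk).2, inv_pow]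
    ring
  have hzn : z ^ n ≠ 0 := pow_ne_zero n hz
  simp only [polyOf, IsRoot, Polynomial.map_sub, Polynomial.map_sum, Polynomial.map_mul,
    Polynomial.map_pow, map_X, map_C, eval_sub, eval_pow, eval_X, eval_finsetSum, eval_mul,
    eval_C, hsum, sub_eq_zero]
  constructor
  · intro h; exact (mul_eq_left₀ hzn).1 h.symm
  · intro h; rw [h, mul_one]

lemma isRoot_polyOf_iff {x : ℝ} (hx : x ≠ 0) :
    (polyOf n c).IsRoot x ↔ ∑ k ∈ Icc 1 n, c k * x⁻¹ ^ k = 1 := by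
  simpa using isRoot_map_polyOf_iff (K := ℝ) (n := n) (c := c) hx

theorem norm_lt_of_isRoot_polyOf (hc : ∀ k ∈ Icc 1 n, 0 ≤ c k)
    (hd : ((Icc 1 n).filter fun k => 0 < c k).gcd id = 1) {ρ : ℝ} (hρ : 0 < ρ)
    (hρroot : (polyOf n c).IsRoot ρ) {z : ℂ} (hz : ((polyOf n c).map (algebraMap ℝ ℂ)).IsRoot z)
    (hzρ : z ≠ ρ) : ‖z‖ < ρ := by
  rcases eq_or_ne z 0 with rfl | hz0
  · simpa using hρ
  set a : ℕ → ℝ := fun k => c k * ρ⁻¹ ^ k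
  have ha : ∀ k ∈ Icc 1 n, 0 ≤ a k := fun k hk => mul_nonneg (hc k hk) (by positivity)
  have hsum : ∑ k ∈ Icc 1 n, a k = 1 := (isRoot_polyOf_iff hρ.ne').1 hρroot
  have hu : ∑ k ∈ Icc 1 n, a k * ((ρ : ℂ) * z⁻¹) ^ k = 1 := by
    rw [← (isRoot_map_polyOf_iff hz0).1 hz]
    refine Finset.sum_congr rfl fun k _ => ?_
    have : (ρ : ℂ) ≠ 0 := by exact_mod_cast hρ.ne'
    simp only [a, Complex.ofReal_mul, Complex.ofReal_pow, Complex.ofReal_inv, mul_pow,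
      Complex.coe_algebraMap, inv_pow]
    rw [mul_assoc, inv_mul_cancel_left₀ (pow_ne_zero k this)]
  have hgcd : ((Icc 1 n).filter fun k => 0 < a k).gcd id = 1 := by
    rwa [Finset.filter_congr fun k _ => mul_pos_iff_of_pos_right (by positivity : 0 < ρ⁻¹ ^ k)]
  rcases eq_one_or_one_lt_norm_of_sum_mul_pow_eq_one ha hsum hu hgcd with h | h
  · exact absurd (by field_simp at h; exact h.symm) hzρ
  · rwa [norm_mul, Complex.norm_real, norm_inv, Real.norm_of_nonneg hρ.le, ← div_eq_mul_inv,
      one_lt_div (norm_pos_iff.2 hz0)] at h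

lemma exists_pos_isRoot_polyOf (hc : ∀ k ∈ Icc 1 n, 0 ≤ c k)
    (hpos : ∃ k ∈ Icc 1 n, 0 < c k) : ∃ ρ : ℝ, 0 < ρ ∧ (polyOf n c).IsRoot ρ := by
  obtain ⟨y, hy, hysum⟩ := exists_pos_sum_mul_pow_eq_one (by simp) hc hpos
  exact ⟨y⁻¹, inv_pos.2 hy, (isRoot_polyOf_iff (inv_ne_zero hy.ne')).2 (by simpa)⟩

end PolyOf

theorem strict_perron_root_general (n : ℕ) (c : ℕ → ℝ)
    (hc : ∀ k ∈ Finset.Icc 1 n, 0 ≤ c k)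
    (hd : ((Finset.Icc 1 n).filter (fun k => 0 < c k)).gcd id = 1) :
    ∃ ρ : ℝ, 0 < ρ ∧ (polyOf n c).IsRoot ρ ∧
      (∀ x : ℝ, 0 < x → (polyOf n c).IsRoot x → x = ρ) ∧
      ∀ z : ℂ, ((polyOf n c).map (algebraMap ℝ ℂ)).IsRoot z → z ≠ (ρ : ℂ) →
        ‖z‖ < ρ := by
  obtain ⟨k, hk, -⟩ := exists_ne_zero_of_gcd_eq_one hd
  obtain ⟨ρ, hρ, hroot⟩ := exists_pos_isRoot_polyOf hc ⟨k, Finset.mem_filter.1 hk⟩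
  refine ⟨ρ, hρ, hroot, fun x hx hxroot => ?_,
    fun z hz => norm_lt_of_isRoot_polyOf hc hd hρ hroot hz⟩
  -- Two distinct positive roots would each strictly dominate the other.
  by_contra hne
  have hlt := norm_lt_of_isRoot_polyOf hc hd hρ hroot (hxroot.map (f := algebraMap ℝ ℂ))
    (by simpa using hne)
  have hgt := norm_lt_of_isRoot_polyOf hc hd hx hxroot (hroot.map (f := algebraMap ℝ ℂ))
    (by simpa using Ne.symm hne)
  simp only [Complex.coe_algebraMap, Complex.norm_real, Real.norm_of_nonneg hx.le,
    Real.norm_of_nonneg hρ.le] at hlt hgt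
  linarith

/-- Strict Perron property: if moreover `gcd {k : c k > 0} = 1`, the unique
positive root `ρ` of `p` strictly dominates the modulus of every other root. -/
theorem strict_perron_root (n : ℕ) (hn : 1 ≤ n) (c : ℕ → ℝ)
    (hc : ∀ k ∈ Finset.Icc 1 n, 0 ≤ c k)
    (hne : ∃ k ∈ Finset.Icc 1 n, 0 < c k)
    (hd : ((Finset.Icc 1 n).filter (fun k => 0 < c k)).gcd id = 1) :
    ∃ ρ : ℝ, 0 < ρ ∧ (polyOf n c).IsRoot ρ ∧
      (∀ x : ℝ, 0 < x → (polyOf n c).IsRoot x → x = ρ) ∧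
      ∀ z : ℂ, ((polyOf n c).map (algebraMap ℝ ℂ)).IsRoot z → z ≠ (ρ : ℂ) →
        ‖z‖ < ρ :=
  strict_perron_root_general n c hc hd
end

section
/- In the digraph of the companion matrix of p(t) = t^n - c_1 t^{n-1} - ... - c_n with c_n > 0, the cycle lengths through vertex n are exactly the indices k with c_k > 0 together with sums thereof; consequently the gcd of all cycle lengths of the digraph equals gcd{k : c_k > 0}. -/
open Matrix Polynomial Finset

/-!
Write `a m` for the `(n, n)` entry of `C ^ m`. Every row of `C` but the last is a unit vector
`e_{i+1}`, so a walk leaving a vertex `j < n` climbs straight up to `n`; hence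
`a (m + 1) = ∑_{k ≤ min (m + 1, n)} c k * a (m + 1 - k)` with `a 0 = 1`. As the `c k` are
nonnegative nothing cancels, so `a m ≠ 0` exactly when `m` splits off a first return `k` with
`c k > 0` and `a (m - k) ≠ 0`, i.e. when `m` lies in the additive monoid generated by
`K = {k | c k > 0}`. A closed walk at any other vertex `i` must pass through `n`, the only vertex
with an arc going down, and rotating it to start at `n` gives `(C ^ m) i i ≤ a m`.

With the size of the matrix written `n + 1`, the vertex `n` is `Fin.last n`.
-/

theorem Matrix.pow_apply_mul_pow_apply_le {ι R : Type*} [Fintype ι] [DecidableEq ι] [Semiring R]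
    [PartialOrder R] [IsOrderedRing R] {A : Matrix ι ι R} (hA : ∀ i j, 0 ≤ A i j)
    (p q : ℕ) (i k j : ι) : (A ^ p) i k * (A ^ q) k j ≤ (A ^ (p + q)) i j := by
  rw [pow_add, mul_apply]
  exact Finset.single_le_sum (f := fun l => (A ^ p) i l * (A ^ q) l j)
    (fun l _ => mul_nonneg (pow_apply_nonneg hA p i l) (pow_apply_nonneg hA q l j)) (mem_univ k)

theorem Nat.mem_addSubmonoidClosure_iff_exists_sub {S : Set ℕ} {m : ℕ} (hm : 0 < m) :
    m ∈ AddSubmonoid.closure S ↔ ∃ k ∈ S, k ≤ m ∧ m - k ∈ AddSubmonoid.closure S := by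
  constructor
  · intro h
    obtain ⟨l, hlS, rfl⟩ := AddSubmonoid.exists_list_of_mem_closure h
    cases l with
    | nil => simp at hm
    | cons k l =>
      refine ⟨k, hlS k List.mem_cons_self, by simp, ?_⟩
      simpa using list_sum_mem
        fun x hx => AddSubmonoid.subset_closure (hlS x (List.mem_cons_of_mem _ hx))
  · rintro ⟨k, hk, hkm, hrest⟩
    simpa [Nat.add_sub_cancel' hkm] using add_mem (AddSubmonoid.subset_closure hk) hrest

theorem Nat.iff_mem_addSubmonoidClosure_of_succ_iff {S : Set ℕ} (hS : 0 ∉ S) {P : ℕ → Prop}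
    (h0 : P 0) (hsucc : ∀ m, P (m + 1) ↔ ∃ k ∈ S, k ≤ m + 1 ∧ P (m + 1 - k)) (m : ℕ) :
    P m ↔ m ∈ AddSubmonoid.closure S := by
  induction m using Nat.strong_induction_on with
  | _ m ih =>
    rcases m with _ | m
    · exact iff_of_true h0 (zero_mem _)
    · rw [hsucc, Nat.mem_addSubmonoidClosure_iff_exists_sub m.succ_pos]
      refine exists_congr fun k => and_congr_right fun hk => and_congr_right fun _ => ih _ ?_
      have : k ≠ 0 := fun h => hS (h ▸ hk)
      omega

section Companion

variable {n : ℕ} {c : ℕ → ℝ}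

theorem companionOf_nonneg (hc : ∀ k ∈ Icc 1 n, 0 ≤ c k) (i j : Fin n) :
    0 ≤ companionOf n c i j := by
  unfold companionOf
  split_ifs
  · exact zero_le_one
  · exact hc _ (mem_Icc.2 ⟨by omega, by omega⟩)
  · exact le_rfl

theorem companionOf_last_apply (j : Fin (n + 1)) :
    companionOf (n + 1) c (Fin.last n) j = c (n + 1 - j) := by
  simp [companionOf, show n + 1 ≠ j by omega]

theorem companionOf_pow_succ_apply (m : ℕ) {i : Fin n} (hi : (i : ℕ) + 1 < n) (j : Fin n) :
    (companionOf n c ^ (m + 1)) i j = (companionOf n c ^ m) ⟨i + 1, hi⟩ j := by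
  rw [pow_succ', mul_apply, Finset.sum_eq_single ⟨i + 1, hi⟩]
  · simp [companionOf]
  · intro l _ hl
    have : (i : ℕ) + 1 ≠ l := fun h => hl (Fin.ext h.symm)
    simp [companionOf, this, show (i : ℕ) ≠ n - 1 by omega]
  · simp

theorem companionOf_pow_add_apply (d m : ℕ) {i : Fin n} (hi : (i : ℕ) + d < n) (j : Fin n) :
    (companionOf n c ^ (d + m)) i j = (companionOf n c ^ m) ⟨i + d, hi⟩ j := by
  induction d generalizing i with
  | zero => simp
  | succ d ih =>
    rw [show d + 1 + m = d + m + 1 by omega, companionOf_pow_succ_apply _ (by omega),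
      ih (by simp; omega)]
    simp only [add_assoc, add_comm 1 d]

theorem companionOf_pow_apply_of_add_lt {m : ℕ} {i : Fin n} (hi : (i : ℕ) + m < n) (j : Fin n) :
    (companionOf n c ^ m) i j = if (i : ℕ) + m = j then 1 else 0 := by
  simpa [one_apply, Fin.ext_iff] using companionOf_pow_add_apply (c := c) m 0 hi j

theorem companionOf_pow_add_apply_of_last (m : ℕ) (i j : Fin (n + 1)) :
    (companionOf (n + 1) c ^ (n - i + m)) i j = (companionOf (n + 1) c ^ m) (Fin.last n) j := by
  rw [companionOf_pow_add_apply _ _ (by omega)]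
  exact congrFun (congrArg _ (Fin.ext (by simp; omega))) j

theorem companionOf_pow_apply_last_ne_zero_iff (m : ℕ) (j : Fin (n + 1)) :
    (companionOf (n + 1) c ^ m) j (Fin.last n) ≠ 0 ↔
      n - j ≤ m ∧ (companionOf (n + 1) c ^ (m - (n - j))) (Fin.last n) (Fin.last n) ≠ 0 := by
  by_cases hm : n - j ≤ m
  · obtain ⟨r, rfl⟩ := Nat.exists_eq_add_of_le hm
    simp [companionOf_pow_add_apply_of_last]
  · rw [companionOf_pow_apply_of_add_lt (by omega), if_neg (by simp; omega)]
    simp [hm]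

theorem companionOf_pow_succ_last_ne_zero_iff (hc : ∀ k ∈ Icc 1 (n + 1), 0 ≤ c k) (m : ℕ) :
    (companionOf (n + 1) c ^ (m + 1)) (Fin.last n) (Fin.last n) ≠ 0 ↔
      ∃ k ∈ (Icc 1 (n + 1)).filter (fun k => 0 < c k), k ≤ m + 1 ∧
        (companionOf (n + 1) c ^ (m + 1 - k)) (Fin.last n) (Fin.last n) ≠ 0 := by
  rw [pow_succ', mul_apply, Ne, Finset.sum_eq_zero_iff_of_nonneg fun j _ =>
    mul_nonneg (companionOf_nonneg hc _ _) (pow_apply_nonneg (companionOf_nonneg hc) _ _ _)]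
  push Not
  simp only [mem_univ, true_and, mul_ne_zero_iff, companionOf_last_apply, mem_filter, mem_Icc]
  constructor
  · rintro ⟨j, hcj, hj⟩
    obtain ⟨hjm, hrest⟩ := (companionOf_pow_apply_last_ne_zero_iff _ _).1 hj
    refine ⟨n + 1 - j, ⟨⟨by omega, by omega⟩, (hc _ (mem_Icc.2 ⟨by omega, by omega⟩)).lt_of_ne' hcj⟩,
      by omega, ?_⟩
    rwa [show m + 1 - (n + 1 - j) = m - (n - j) by omega]
  · rintro ⟨k, ⟨hk, hck⟩, hkm, hrest⟩
    refine ⟨⟨n + 1 - k, by omega⟩, by simpa [Nat.sub_sub_self hk.2] using hck.ne',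
      (companionOf_pow_apply_last_ne_zero_iff _ _).2 ⟨by simp only; omega, ?_⟩⟩
    rwa [show m - (n - (n + 1 - k)) = m + 1 - k by omega]

theorem companionOf_pow_last_ne_zero_iff (hc : ∀ k ∈ Icc 1 (n + 1), 0 ≤ c k) (m : ℕ) :
    (companionOf (n + 1) c ^ m) (Fin.last n) (Fin.last n) ≠ 0 ↔
      m ∈ AddSubmonoid.closure
        (((Icc 1 (n + 1)).filter (fun k => 0 < c k) : Finset ℕ) : Set ℕ) := by
  refine Nat.iff_mem_addSubmonoidClosure_of_succ_iff
    (P := fun m => (companionOf (n + 1) c ^ m) (Fin.last n) (Fin.last n) ≠ 0) ?_ ?_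
    (companionOf_pow_succ_last_ne_zero_iff hc) m <;> simp

theorem companionOf_pow_apply_self_le_last (hc : ∀ k ∈ Icc 1 (n + 1), 0 ≤ c k) {m : ℕ}
    (hm : 0 < m) (i : Fin (n + 1)) :
    (companionOf (n + 1) c ^ m) i i ≤ (companionOf (n + 1) c ^ m) (Fin.last n) (Fin.last n) := by
  by_cases him : n - i ≤ m
  · obtain ⟨r, rfl⟩ := Nat.exists_eq_add_of_le him
    calc (companionOf (n + 1) c ^ (n - i + r)) i i
        = (companionOf (n + 1) c ^ r) (Fin.last n) i *
            (companionOf (n + 1) c ^ (n - i + 0)) i (Fin.last n) := by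
          rw [companionOf_pow_add_apply_of_last, companionOf_pow_add_apply_of_last, pow_zero,
            one_apply_eq, mul_one]
      _ ≤ _ := by
          rw [add_zero, add_comm (n - i)]
          exact pow_apply_mul_pow_apply_le (companionOf_nonneg hc) _ _ _ _ _
  · rw [companionOf_pow_apply_of_add_lt (by omega), if_neg (by omega)]
    exact pow_apply_nonneg (companionOf_nonneg hc) _ _ _

end Companion

/-- In the digraph of the companion matrix of `p` (with `c n > 0`), the lengths
of the closed walks through vertex `n` (cycles together with sums thereof) are
exactly the elements of the additive monoid generated by
`K = {k : c k > 0}`; consequently the common divisors of all cycle lengths of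
the digraph are exactly the common divisors of `K`, i.e. the gcd of all cycle
lengths equals `gcd K`. -/
theorem companion_digraph_cycles (n : ℕ) (hn : 1 ≤ n) (c : ℕ → ℝ)
    (hc : ∀ k ∈ Finset.Icc 1 n, 0 ≤ c k) :
    (∀ m : ℕ, 0 < m →
      ((((companionOf n c) ^ m) ⟨n - 1, by omega⟩ ⟨n - 1, by omega⟩ ≠ 0) ↔
        m ∈ AddSubmonoid.closure
          (((Finset.Icc 1 n).filter (fun k => 0 < c k) : Finset ℕ) : Set ℕ))) ∧
    (∀ e : ℕ,
      (∀ m : ℕ, 0 < m → (∃ i, ((companionOf n c) ^ m) i i ≠ 0) → e ∣ m) ↔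
        (∀ k ∈ (Finset.Icc 1 n).filter (fun k => 0 < c k), e ∣ k)) := by
  obtain ⟨n, rfl⟩ : ∃ n', n = n' + 1 := ⟨n - 1, by omega⟩
  refine ⟨fun m _ => companionOf_pow_last_ne_zero_iff hc m, fun e => ⟨fun h k hk => ?_, ?_⟩⟩
  · have hk_pos : 0 < k := by simp only [mem_filter, mem_Icc] at hk; omega
    exact h k hk_pos
      ⟨Fin.last n, (companionOf_pow_last_ne_zero_iff hc k).2 (AddSubmonoid.subset_closure hk)⟩
  · rintro h m hm ⟨i, hi⟩
    have hlast : (companionOf (n + 1) c ^ m) (Fin.last n) (Fin.last n) ≠ 0 :=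
      (((pow_apply_nonneg (companionOf_nonneg hc) m i i).lt_of_ne' hi).trans_le
        (companionOf_pow_apply_self_le_last hc hm i)).ne'
    exact AddSubmonoid.closure_induction (fun k hk => h k hk) (dvd_zero e)
      (fun _ _ _ _ => dvd_add) ((companionOf_pow_last_ne_zero_iff hc m).1 hlast)
end
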